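/- Let p̃, q̃ be integers with p̃ < 0 and q̃ ≥ 97·|p̃|. Then there exists a real number t with Q_{p̃+q̃, q̃}(t) = 0 satisfying q̃² + 5·p̃·q̃ + 10·p̃² < t < q̃² + 5·p̃·q̃ + 10·p̃² + 74·|p̃|³/q̃. -/

import Mathlib

/-!
Write `p̃ = -s` and `q̃ = 97 s + r` with `s > 0`, `r ≥ 0`. At both ends of the interval the value
of `Q_{p̃+q̃, q̃}` (after clearing the denominator `q̃` by homogeneity at the upper end) becomes a
polynomial in `s` and `r` all of whose coefficients have the same sign: negative at the lower end,
positive at the upper one. The intermediate value theorem then gives the root.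
-/

/-- The cuboid characteristic polynomial `Q_{p,q}(t)`. -/
def cuboidQ {R : Type*} [CommRing R] (p q t : R) : R :=
  t ^ 10 + (2 * q ^ 2 + p ^ 2) * (3 * q ^ 2 - 2 * p ^ 2) * t ^ 8
    + (q ^ 8 + 10 * p ^ 2 * q ^ 6 + 4 * p ^ 4 * q ^ 4 - 14 * p ^ 6 * q ^ 2 + p ^ 8) * t ^ 6
    - p ^ 2 * q ^ 2 * (q ^ 8 - 14 * p ^ 2 * q ^ 6 + 4 * p ^ 4 * q ^ 4 + 10 * p ^ 6 * q ^ 2 + p ^ 8) * t ^ 4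
    - p ^ 6 * q ^ 6 * (q ^ 2 + 2 * p ^ 2) * (3 * p ^ 2 - 2 * q ^ 2) * t ^ 2
    - p ^ 10 * q ^ 10

theorem cuboidQ_mul_mul_sq_mul {R : Type*} [CommRing R] (c p q t : R) :
    cuboidQ (c * p) (c * q) (c ^ 2 * t) = c ^ 20 * cuboidQ p q t := by
  unfold cuboidQ
  ring

theorem continuous_cuboidQ (p q : ℝ) : Continuous (cuboidQ p q) := by
  unfold cuboidQ
  fun_prop

theorem cuboidQ_bisectorial_neg_at_lower {s r : ℝ} (hs : 0 < s) (hr : 0 ≤ r) :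
    cuboidQ (-s + (97 * s + r)) (97 * s + r)
      ((97 * s + r) ^ 2 + 5 * (-s) * (97 * s + r) + 10 * (-s) ^ 2) < 0 := by
  rw [← neg_pos]
  unfold cuboidQ
  ring_nf
  positivity

theorem cuboidQ_bisectorial_pos_at_upper {s r : ℝ} (hs : 0 < s) (hr : 0 ≤ r) :
    0 < cuboidQ (-s + (97 * s + r)) (97 * s + r)
      ((97 * s + r) ^ 2 + 5 * (-s) * (97 * s + r) + 10 * (-s) ^ 2
        + 74 * s ^ 3 / (97 * s + r)) := by
  set q := 97 * s + r with hq_def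
  have hq : 0 < q := by positivity
  have hcleared : q ^ 2 * (q ^ 2 + 5 * (-s) * q + 10 * (-s) ^ 2 + 74 * s ^ 3 / q)
      = q ^ 2 * (q ^ 2 + 5 * (-s) * q + 10 * (-s) ^ 2) + 74 * s ^ 3 * q := by
    field_simp
  rw [← mul_pos_iff_of_pos_left (pow_pos hq 20), ← cuboidQ_mul_mul_sq_mul, hcleared, hq_def]
  unfold cuboidQ
  ring_nf
  positivity

/-- For integers `p̃ < 0` and `q̃ ≥ 97|p̃|` there is a real root of `Q_{p̃+q̃, q̃}` in the
asymptotic interval `(q̃² + 5p̃q̃ + 10p̃², q̃² + 5p̃q̃ + 10p̃² + 74|p̃|³/q̃)`. -/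
theorem stmt_6 (p' q' : ℤ) (hp : p' < 0) (hq : 97 * |p'| ≤ q') :
    ∃ t : ℝ, cuboidQ ((p' : ℝ) + (q' : ℝ)) (q' : ℝ) t = 0 ∧
      (q' : ℝ) ^ 2 + 5 * (p' : ℝ) * (q' : ℝ) + 10 * (p' : ℝ) ^ 2 < t ∧
      t < (q' : ℝ) ^ 2 + 5 * (p' : ℝ) * (q' : ℝ) + 10 * (p' : ℝ) ^ 2
          + 74 * |(p' : ℝ)| ^ 3 / (q' : ℝ) := by
  have hpR : (p' : ℝ) < 0 := by exact_mod_cast hp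
  have hqR : 97 * |(p' : ℝ)| ≤ q' := by exact_mod_cast hq
  rw [abs_of_neg hpR] at hqR ⊢
  obtain ⟨s, hs, hps⟩ : ∃ s : ℝ, 0 < s ∧ (p' : ℝ) = -s := ⟨-p', by linarith, by ring⟩
  obtain ⟨r, hr, hqr⟩ : ∃ r : ℝ, 0 ≤ r ∧ (q' : ℝ) = 97 * s + r := ⟨q' - 97 * s, by linarith, by ring⟩
  rw [hps, hqr, neg_neg]
  have hgap : 0 < 74 * s ^ 3 / (97 * s + r) := by positivity
  obtain ⟨t, ⟨hlower, hupper⟩, hroot⟩ := intermediate_value_Ioo (by linarith)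
    (continuous_cuboidQ _ _).continuousOn
    ⟨cuboidQ_bisectorial_neg_at_lower hs hr, cuboidQ_bisectorial_pos_at_upper hs hr⟩
  exact ⟨t, hroot, hlower, hupper⟩
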